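/- Define the vacuum-diagram integrals V(n,a,b) := ∫₀^∞ x^{2n+1} K₀(x)^a (x·K₀'(x))^b dx for integers n ≥ 0, a, b ≥ 0 with a + b > 0. Then 2(n+1)·V(n,a,b) + a·V(n,a-1,b+1) + b·V(n+1,a+1,b-1) = 0. -/

import Mathlib

open MeasureTheory

noncomputable def K₀ (t : ℝ) : ℝ := ∫ x in Set.Ioi (0:ℝ), Real.exp (-t * Real.cosh x)

/-- Broadhurst's vacuum-diagram integrals. -/
noncomputable def V (n a b : ℕ) : ℝ :=
  ∫ x in Set.Ioi (0:ℝ), x ^ (2 * n + 1) * (K₀ x) ^ a * (x * deriv K₀ x) ^ b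

/-!
With `Kₖ(t) = ∫₀^∞ coshᵏ u · e^(-t cosh u) du` one has `K₀' = -K₁`, `K₁' = -K₂`, and
integrating `(sinh u · e^(-x cosh u))'` over `u > 0` gives `x K₂ = K₁ + x K₀`, i.e. Bessel's
equation `(x K₀')' = x K₀`. Hence the derivative of the boundary term `x^(2n+2) K₀^a (x K₀')^b`
is exactly the combination of integrands in the recurrence, which therefore says that this term
vanishes at `0` and at `∞`. Near `0`, `K₀(x)` and `x K₁(x)` are `O(1 + log (1/x))`, and
`x (1 + log (1/x))ᴺ` stays bounded; for `x ≥ 1` both decay like `x e^(-x)`.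
-/

open Real Set Filter Topology
open scoped Nat

-- `coshMoment k = (-d/dt)ᵏ K₀`; in particular `coshMoment 1 = K₁ = -K₀'`.
noncomputable def coshMoment (k : ℕ) (t : ℝ) : ℝ :=
  ∫ u in Ioi (0:ℝ), cosh u ^ k * exp (-t * cosh u)

lemma K₀_eq_coshMoment_zero : K₀ = coshMoment 0 := by
  funext t; simp [K₀, coshMoment]

lemma coshMoment_nonneg (k : ℕ) (t : ℝ) : 0 ≤ coshMoment k t :=
  integral_nonneg fun u => by positivity

lemma K₀_nonneg (x : ℝ) : 0 ≤ K₀ x :=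
  K₀_eq_coshMoment_zero ▸ coshMoment_nonneg 0 x

lemma exp_le_two_mul_cosh (u : ℝ) : exp u ≤ 2 * cosh u := by
  rw [cosh_eq]; linarith [exp_pos (-u)]

lemma cosh_pow_mul_exp_le (k : ℕ) {t : ℝ} (ht : 0 < t) (u : ℝ) :
    cosh u ^ k * exp (-t * cosh u) ≤ 2 * (k + 1)! / t ^ (k + 1) * exp (-u) := by
  -- `(t y)^(k+1) / (k+1)! ≤ e^(t y)` for `y = cosh u`, and `1 / y ≤ 2 e^(-u)`
  have hy : 0 < cosh u := cosh_pos u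
  have taylor := pow_div_factorial_le_exp (t * cosh u) (by positivity) (k + 1)
  rw [mul_pow, div_le_iff₀ (by positivity)] at taylor
  have key := mul_le_mul taylor (exp_le_two_mul_cosh u) (exp_pos u).le (by positivity)
  rw [neg_mul, exp_neg, exp_neg]
  field_simp
  refine le_of_mul_le_mul_right ?_ hy
  convert key using 1 <;> ring

lemma integrableOn_cosh_pow_mul_exp (k : ℕ) {t : ℝ} (ht : 0 < t) :
    IntegrableOn (fun u => cosh u ^ k * exp (-t * cosh u)) (Ioi 0) := by
  refine ((integrableOn_exp_neg_Ioi 0).const_mul (2 * (k + 1)! / t ^ (k + 1))).mono'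
    (by fun_prop : Continuous _).aestronglyMeasurable (ae_of_all _ fun u => ?_)
  rw [norm_of_nonneg (by positivity)]
  exact cosh_pow_mul_exp_le k ht u

lemma hasDerivAt_coshMoment (k : ℕ) {t : ℝ} (ht : 0 < t) :
    HasDerivAt (coshMoment k) (-coshMoment (k + 1) t) t := by
  have hderiv (u s : ℝ) : HasDerivAt (fun s => cosh u ^ k * exp (-s * cosh u))
      (-(cosh u ^ (k + 1) * exp (-s * cosh u))) s :=
    ((((hasDerivAt_neg s).mul_const (cosh u)).exp).const_mul (cosh u ^ k)).congr_deriv (by ring)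
  have hbound : ∀ u, ∀ s ∈ Metric.ball t (t / 2),
      ‖-(cosh u ^ (k + 1) * exp (-s * cosh u))‖
        ≤ cosh u ^ (k + 1) * exp (-(t / 2) * cosh u) := by
    intro u s hs
    have hs' : t / 2 ≤ s := by
      have := (abs_lt.1 (mem_ball_iff_norm.1 hs)).1; linarith
    rw [norm_neg, norm_of_nonneg (by positivity)]
    gcongr
  have := hasDerivAt_integral_of_dominated_loc_of_deriv_le (μ := volume.restrict (Ioi 0))
    (F := fun s u => cosh u ^ k * exp (-s * cosh u))
    (Metric.ball_mem_nhds t (half_pos ht))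
    (Eventually.of_forall fun s => (by fun_prop : Continuous _).aestronglyMeasurable)
    (integrableOn_cosh_pow_mul_exp k ht)
    (by fun_prop : Continuous _).aestronglyMeasurable
    (ae_of_all _ hbound) (integrableOn_cosh_pow_mul_exp (k + 1) (half_pos ht))
    (ae_of_all _ fun u s _ => hderiv u s)
  rw [coshMoment, ← integral_neg]
  exact this.2

lemma abs_sinh_le_cosh (u : ℝ) : |sinh u| ≤ cosh u :=
  abs_le.2 ⟨by linarith [cosh_add_sinh u, exp_pos u], by linarith [cosh_sub_sinh u, exp_pos (-u)]⟩

lemma mul_coshMoment_two {x : ℝ} (hx : 0 < x) :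
    x * coshMoment 2 x = coshMoment 1 x + x * coshMoment 0 x := by
  have I (k : ℕ) := integrableOn_cosh_pow_mul_exp k hx
  set f' : ℝ → ℝ := fun u => cosh u ^ 1 * exp (-x * cosh u)
    + x * (cosh u ^ 0 * exp (-x * cosh u)) - x * (cosh u ^ 2 * exp (-x * cosh u))
  have hderiv (u : ℝ) : HasDerivAt (fun u => sinh u * exp (-x * cosh u)) (f' u) u := by
    refine ((hasDerivAt_sinh u).mul ((hasDerivAt_cosh u).const_mul (-x)).exp).congr_deriv ?_
    linear_combination (x * exp (-x * cosh u)) * cosh_sq_sub_sinh_sq u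
  have hf' : IntegrableOn f' (Ioi 0) := ((I 1).add ((I 0).const_mul x)).sub ((I 2).const_mul x)
  have hf : IntegrableOn (fun u => sinh u * exp (-x * cosh u)) (Ioi 0) := by
    refine (I 1).mono' (by fun_prop : Continuous _).aestronglyMeasurable
      (ae_of_all _ fun u => ?_)
    rw [norm_mul, norm_of_nonneg (exp_pos _).le, pow_one]
    exact mul_le_mul_of_nonneg_right (abs_sinh_le_cosh u) (exp_pos _).le
  have ftc := integral_Ioi_of_hasDerivAt_of_tendsto' (fun u _ => hderiv u) hf'
    (tendsto_zero_of_hasDerivAt_of_integrableOn_Ioi (fun u _ => hderiv u) hf' hf)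
  simp only [f'] at ftc
  rw [integral_sub, integral_add, integral_const_mul, integral_const_mul] at ftc
  · simp only [sinh_zero, zero_mul, sub_zero] at ftc
    simp only [coshMoment]
    linarith
  exacts [I 1, (I 0).const_mul x, (I 1).add ((I 0).const_mul x), (I 2).const_mul x]

lemma hasDerivAt_K₀ {x : ℝ} (hx : 0 < x) : HasDerivAt K₀ (-coshMoment 1 x) x :=
  K₀_eq_coshMoment_zero ▸ hasDerivAt_coshMoment 0 hx

lemma deriv_K₀ {x : ℝ} (hx : 0 < x) : deriv K₀ x = -coshMoment 1 x :=
  (hasDerivAt_K₀ hx).deriv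

lemma continuousOn_K₀ : ContinuousOn K₀ (Ioi 0) :=
  fun _ hx => (hasDerivAt_K₀ hx).continuousAt.continuousWithinAt

lemma continuousOn_deriv_K₀ : ContinuousOn (deriv K₀) (Ioi 0) :=
  ContinuousOn.congr (f := fun x => -coshMoment 1 x)
    (fun _ hx => (hasDerivAt_coshMoment 1 hx).continuousAt.neg.continuousWithinAt)
    fun _ hx => deriv_K₀ hx

lemma hasDerivAt_mul_deriv_K₀ {x : ℝ} (hx : 0 < x) :
    HasDerivAt (fun y => y * deriv K₀ y) (x * K₀ x) x := by
  have heq : (fun y => y * deriv K₀ y) =ᶠ[𝓝 x] fun y => -(y * coshMoment 1 y) :=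
    eventually_of_mem (Ioi_mem_nhds hx) fun y hy => by simp only [deriv_K₀ hy, mul_neg]
  refine (((hasDerivAt_id x).mul (hasDerivAt_coshMoment 1 hx)).neg.congr_of_eventuallyEq heq)
    |>.congr_deriv ?_
  rw [K₀_eq_coshMoment_zero]
  simp only [id, one_mul, Nat.reduceAdd]
  linarith [mul_coshMoment_two hx]

noncomputable def vacuumIntegrand (m a b : ℕ) (x : ℝ) : ℝ :=
  x ^ m * K₀ x ^ a * (x * deriv K₀ x) ^ b

lemma hasDerivAt_vacuumIntegrand (m a b : ℕ) {x : ℝ} (hx : 0 < x) :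
    HasDerivAt (vacuumIntegrand (m + 1) a b)
      ((m + 1) * vacuumIntegrand m a b x + a * vacuumIntegrand m (a - 1) (b + 1) x
        + b * vacuumIntegrand (m + 2) (a + 1) (b - 1) x) x := by
  refine (((hasDerivAt_pow (m + 1) x).mul ((hasDerivAt_K₀ hx).pow a)).mul
    ((hasDerivAt_mul_deriv_K₀ hx).pow b)).congr_deriv ?_
  simp only [vacuumIntegrand, Pi.pow_apply, Pi.mul_apply, deriv_K₀ hx, Nat.add_sub_cancel]
  push_cast
  ring

lemma continuousOn_vacuumIntegrand (m a b : ℕ) : ContinuousOn (vacuumIntegrand m a b) (Ioi 0) :=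
  ((continuousOn_id.pow m).mul (continuousOn_K₀.pow a)).mul
    ((continuousOn_id.mul continuousOn_deriv_K₀).pow b)

lemma K₀_le_one_add_log {x : ℝ} (hx : 0 < x) (hx2 : x ≤ 2) : K₀ x ≤ 1 + log (2 / x) := by
  set T := log (2 / x)
  have hT : 0 ≤ T := log_nonneg (by rw [le_div_iff₀ hx]; linarith)
  have hint : IntegrableOn (fun u => exp (-x * cosh u)) (Ioi 0) := by
    simpa using integrableOn_cosh_pow_mul_exp 0 hx
  have head : ∫ u in Ioc 0 T, exp (-x * cosh u) ≤ T := by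
    have := norm_setIntegral_le_of_norm_le_const (f := fun u => exp (-x * cosh u)) (C := 1)
      (measure_Ioc_lt_top (μ := volume) (a := 0) (b := T))
      fun u _ => by
        rw [norm_of_nonneg (exp_pos _).le, exp_le_one_iff]
        nlinarith [cosh_pos u]
    rw [Real.volume_real_Ioc_of_le hT, one_mul, sub_zero] at this
    exact (le_abs_self _).trans this
  -- past `T = log (2 / x)`, `x cosh u ≥ x eᵘ / 2 = e^(u - T) ≥ 1 + u - T`
  have hpt (u : ℝ) : exp (-x * cosh u) ≤ exp (T - 1) * exp (-u) := by
    have h1 : exp (u - T) = x * exp u / 2 := by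
      rw [exp_sub, exp_log (by positivity)]; field_simp
    have h2 := add_one_le_exp (u - T)
    have h3 := mul_le_mul_of_nonneg_left (exp_le_two_mul_cosh u) hx.le
    rw [← exp_add]
    exact exp_le_exp.2 (by linarith)
  have tail : ∫ u in Ioi T, exp (-x * cosh u) ≤ 1 :=
    calc ∫ u in Ioi T, exp (-x * cosh u)
        ≤ ∫ u in Ioi T, exp (T - 1) * exp (-u) :=
          setIntegral_mono_on (hint.mono_set (Ioi_subset_Ioi hT))
            ((integrableOn_exp_neg_Ioi T).const_mul _) measurableSet_Ioi fun u _ => hpt u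
      _ = exp (-1) := by rw [integral_const_mul, integral_exp_neg_Ioi, ← exp_add]; ring_nf
      _ ≤ 1 := exp_le_one_iff.2 (by norm_num)
  rw [K₀, ← Ioc_union_Ioi_eq_Ioi hT, setIntegral_union (Ioc_disjoint_Ioi le_rfl)
    measurableSet_Ioi (hint.mono_set Ioc_subset_Ioi_self) (hint.mono_set (Ioi_subset_Ioi hT))]
  linarith

lemma mul_coshMoment_one_le {x : ℝ} (hx : 0 < x) : x * coshMoment 1 x ≤ 2 * K₀ (x / 2) := by
  rw [coshMoment, K₀, ← integral_const_mul, ← integral_const_mul]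
  refine setIntegral_mono_on ((integrableOn_cosh_pow_mul_exp 1 hx).const_mul x)
    (by simpa [IntegrableOn] using (integrableOn_cosh_pow_mul_exp 0 (half_pos hx)).const_mul 2)
    measurableSet_Ioi fun u _ => ?_
  -- with `s = x cosh u / 2`, this is `2 s e^(-2s) ≤ 2 e^(-s)`, i.e. `s ≤ eˢ`
  set s := x * cosh u / 2 with hs_def
  have hs : s ≤ exp s := by linarith [add_one_le_exp s]
  have h1 : exp (-x * cosh u) = exp (-s) * exp (-s) := by rw [← exp_add, hs_def]; ring_nf
  have h2 : -(x / 2) * cosh u = -s := by rw [hs_def]; ring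
  rw [pow_one, h1, h2]
  calc x * (cosh u * (exp (-s) * exp (-s))) = 2 * (s * exp (-s)) * exp (-s) := by ring
    _ ≤ 2 * 1 * exp (-s) := by
        gcongr
        rw [exp_neg, ← div_eq_mul_inv, div_le_one (exp_pos s)]
        exact hs
    _ = 2 * exp (-s) := by ring

lemma coshMoment_le_of_one_le (k : ℕ) {x : ℝ} (hx : 1 ≤ x) :
    coshMoment k x ≤ exp (1 - x) * coshMoment k 1 := by
  rw [coshMoment, coshMoment, ← integral_const_mul]
  refine setIntegral_mono_on (integrableOn_cosh_pow_mul_exp k (by linarith))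
    ((integrableOn_cosh_pow_mul_exp k one_pos).const_mul _) measurableSet_Ioi fun u _ => ?_
  rw [mul_left_comm, ← exp_add]
  gcongr
  nlinarith [one_le_cosh u]

-- equals `|K₀ x| + |x K₀' x|` for `x > 0`
noncomputable def besselEnvelope (x : ℝ) : ℝ := K₀ x + x * coshMoment 1 x

lemma besselEnvelope_nonneg {x : ℝ} (hx : 0 ≤ x) : 0 ≤ besselEnvelope x :=
  add_nonneg (K₀_nonneg x) (mul_nonneg hx (coshMoment_nonneg 1 x))

lemma abs_vacuumIntegrand_le (m a b : ℕ) {x : ℝ} (hx : 0 < x) :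
    |vacuumIntegrand m a b x| ≤ x ^ m * besselEnvelope x ^ (a + b) := by
  have hK₁ := mul_nonneg hx.le (coshMoment_nonneg 1 x)
  have hK : |K₀ x| ≤ besselEnvelope x := by
    rw [abs_of_nonneg (K₀_nonneg x), besselEnvelope]; linarith
  have hL : |x * deriv K₀ x| ≤ besselEnvelope x := by
    rw [deriv_K₀ hx, mul_neg, abs_neg, abs_of_nonneg hK₁, besselEnvelope]
    linarith [K₀_nonneg x]
  rw [vacuumIntegrand, abs_mul, abs_mul, abs_pow, abs_pow, abs_pow, abs_of_pos hx, pow_add,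
    mul_assoc]
  have := besselEnvelope_nonneg hx.le
  gcongr

lemma besselEnvelope_le {x : ℝ} (hx : 0 < x) (hx1 : x ≤ 1) :
    besselEnvelope x ≤ 3 * (1 + log (4 / x)) := by
  have h₀ := K₀_le_one_add_log hx (by linarith)
  have h₁ := K₀_le_one_add_log (half_pos hx) (by linarith)
  have h₂ := mul_coshMoment_one_le hx
  have hlog : log (2 / x) ≤ log (4 / x) := log_le_log (by positivity) (by gcongr; norm_num)
  rw [div_div_eq_mul_div, show (2 : ℝ) * 2 = 4 by norm_num] at h₁
  rw [besselEnvelope]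
  linarith

lemma mul_besselEnvelope_pow_le (N : ℕ) {x : ℝ} (hx : 0 < x) (hx1 : x ≤ 1) :
    x * besselEnvelope x ^ N ≤ 4 * exp 1 * 3 ^ N * N ! := by
  have hL : 0 ≤ 1 + log (4 / x) := by
    have : 0 ≤ log (4 / x) := log_nonneg (by rw [le_div_iff₀ hx]; linarith)
    linarith
  -- `(1 + log (4 / x)) ^ N ≤ N! e^(1 + log (4 / x)) = 4 e N! / x`
  have taylor := pow_div_factorial_le_exp _ hL N
  rw [exp_add, exp_log (by positivity), div_le_iff₀ (by positivity)] at taylor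
  have hE := besselEnvelope_nonneg hx.le
  calc x * besselEnvelope x ^ N ≤ x * (3 * (1 + log (4 / x))) ^ N := by
        gcongr; exact besselEnvelope_le hx hx1
    _ = 3 ^ N * (x * (1 + log (4 / x)) ^ N) := by rw [mul_pow]; ring
    _ ≤ 3 ^ N * (x * (exp 1 * (4 / x) * N !)) := by gcongr
    _ = 4 * exp 1 * 3 ^ N * N ! := by field_simp

lemma besselEnvelope_le_of_one_le {x : ℝ} (hx : 1 ≤ x) :
    besselEnvelope x ≤ x * exp (1 - x) * besselEnvelope 1 := by
  have h₀ := coshMoment_le_of_one_le 0 hx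
  have h₁ := mul_le_mul_of_nonneg_left (coshMoment_le_of_one_le 1 hx) (by linarith : (0:ℝ) ≤ x)
  have h₂ := mul_le_mul_of_nonneg_left (le_mul_of_one_le_left (coshMoment_nonneg 0 1) hx)
    (exp_pos (1 - x)).le
  rw [besselEnvelope, besselEnvelope, K₀_eq_coshMoment_zero]
  linarith

lemma exists_abs_vacuumIntegrand_succ_le (m a b : ℕ) :
    ∃ C, ∀ x ∈ Ioc (0:ℝ) 1, |vacuumIntegrand (m + 1) a b x| ≤ C * x ^ m := by
  refine ⟨4 * exp 1 * 3 ^ (a + b) * (a + b)!, fun x ⟨hx, hx1⟩ => ?_⟩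
  calc |vacuumIntegrand (m + 1) a b x| ≤ x ^ m * (x * besselEnvelope x ^ (a + b)) := by
        rw [← mul_assoc, ← pow_succ]; exact abs_vacuumIntegrand_le _ a b hx
    _ ≤ x ^ m * (4 * exp 1 * 3 ^ (a + b) * (a + b)!) := by
        gcongr ?_ * ?_; exact mul_besselEnvelope_pow_le _ hx hx1
    _ = _ := mul_comm _ _

lemma abs_vacuumIntegrand_le_of_one_le (m a b : ℕ) (hab : 0 < a + b) {x : ℝ} (hx : 1 ≤ x) :
    |vacuumIntegrand m a b x|
      ≤ besselEnvelope 1 ^ (a + b) * exp 1 * (x ^ (m + 1) * exp (-x)) := by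
  have hdecay : x * exp (1 - x) ≤ 1 := by
    have := mul_le_mul_of_nonneg_right (add_one_le_exp (x - 1)) (exp_pos (1 - x)).le
    rwa [sub_add_cancel, ← exp_add, sub_add_sub_cancel, sub_self, exp_zero] at this
  have hE₁ := besselEnvelope_nonneg zero_le_one
  calc |vacuumIntegrand m a b x|
      ≤ x ^ m * (x * exp (1 - x) * besselEnvelope 1) ^ (a + b) :=
        (abs_vacuumIntegrand_le m a b (by linarith)).trans <| by
          gcongr
          · exact besselEnvelope_nonneg (by linarith)
          · exact besselEnvelope_le_of_one_le hx
    _ = besselEnvelope 1 ^ (a + b) * (x ^ m * (x * exp (1 - x)) ^ (a + b)) := by ring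
    _ ≤ besselEnvelope 1 ^ (a + b) * (x ^ m * (x * exp (1 - x))) := by
        gcongr
        exact pow_le_of_le_one (by positivity) hdecay hab.ne'
    _ = besselEnvelope 1 ^ (a + b) * exp 1 * (x ^ (m + 1) * exp (-x)) := by
        rw [exp_sub, exp_neg]; field_simp; ring

lemma integrableOn_pow_mul_exp_neg (n : ℕ) :
    IntegrableOn (fun x : ℝ => x ^ n * exp (-x)) (Ioi 0) := by
  simpa using integrableOn_rpow_mul_exp_neg_rpow (s := n) (p := 1)
    (by linarith [n.cast_nonneg (α := ℝ)]) one_pos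

lemma integrableOn_vacuumIntegrand (m a b : ℕ) (hm : 1 ≤ m) (hab : 0 < a + b) :
    IntegrableOn (vacuumIntegrand m a b) (Ioi 0) := by
  obtain ⟨k, rfl⟩ : ∃ k, m = k + 1 := ⟨m - 1, by omega⟩
  obtain ⟨C, hC⟩ := exists_abs_vacuumIntegrand_succ_le k a b
  rw [← Ioc_union_Ioi_eq_Ioi zero_le_one, integrableOn_union]
  constructor
  · exact (continuous_const.mul (continuous_pow k)).integrableOn_Ioc.mono'
      (((continuousOn_vacuumIntegrand _ a b).mono Ioc_subset_Ioi_self).aestronglyMeasurable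
        measurableSet_Ioc)
      (ae_restrict_of_forall_mem measurableSet_Ioc hC)
  · exact (((integrableOn_pow_mul_exp_neg (k + 2)).mono_set
      (Ioi_subset_Ioi zero_le_one)).const_mul _).mono'
      (((continuousOn_vacuumIntegrand _ a b).mono
        (Ioi_subset_Ioi zero_le_one)).aestronglyMeasurable measurableSet_Ioi)
      (ae_restrict_of_forall_mem measurableSet_Ioi fun x hx =>
        abs_vacuumIntegrand_le_of_one_le _ a b hab (le_of_lt hx))

lemma vacuumIntegrand_succ_zero (m a b : ℕ) : vacuumIntegrand (m + 1) a b 0 = 0 := by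
  simp [vacuumIntegrand]

lemma continuousWithinAt_vacuumIntegrand_zero (m a b : ℕ) (hm : 1 ≤ m) :
    ContinuousWithinAt (vacuumIntegrand (m + 1) a b) (Ici 0) 0 := by
  obtain ⟨C, hC⟩ := exists_abs_vacuumIntegrand_succ_le m a b
  rw [← continuousWithinAt_Ioi_iff_Ici, ContinuousWithinAt]
  rw [vacuumIntegrand_succ_zero]
  refine squeeze_zero_norm' (eventually_of_mem (Ioc_mem_nhdsGT zero_lt_one) hC) ?_
  simpa [zero_pow (by omega : m ≠ 0)] using
    ((continuous_const.mul (continuous_pow m)).tendsto 0).mono_left nhdsWithin_le_nhds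
      (f := fun x : ℝ => C * x ^ m)

theorem integral_vacuumIntegrand_recurrence (m a b : ℕ) (hm : 1 ≤ m) (hab : 0 < a + b) :
    (m + 1) * (∫ x in Ioi 0, vacuumIntegrand m a b x)
      + a * (∫ x in Ioi 0, vacuumIntegrand m (a - 1) (b + 1) x)
      + b * (∫ x in Ioi 0, vacuumIntegrand (m + 2) (a + 1) (b - 1) x) = 0 := by
  have i₁ := integrableOn_vacuumIntegrand m a b hm hab
  have i₂ := integrableOn_vacuumIntegrand m (a - 1) (b + 1) hm (by omega)
  have i₃ := integrableOn_vacuumIntegrand (m + 2) (a + 1) (b - 1) (by omega) (by omega)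
  have hderiv := fun x (hx : x ∈ Ioi (0:ℝ)) =>
    hasDerivAt_vacuumIntegrand m a b (mem_Ioi.1 hx)
  have hint :=
    ((i₁.const_mul (m + 1 : ℝ)).add (i₂.const_mul (a : ℝ))).add (i₃.const_mul (b : ℝ))
  have hatTop := tendsto_zero_of_hasDerivAt_of_integrableOn_Ioi hderiv hint
    (integrableOn_vacuumIntegrand (m + 1) a b (by omega) hab)
  have ftc := integral_Ioi_of_hasDerivAt_of_tendsto
    (continuousWithinAt_vacuumIntegrand_zero m a b hm) hderiv hint hatTop
  rw [integral_add, integral_add, integral_const_mul, integral_const_mul, integral_const_mul]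
    at ftc
  · rwa [vacuumIntegrand_succ_zero, sub_zero] at ftc
  exacts [i₁.const_mul _, i₂.const_mul _, (i₁.const_mul _).add (i₂.const_mul _), i₃.const_mul _]

theorem vacuum_recurrence (n a b : ℕ) (hab : 0 < a + b) :
    2 * ((n : ℝ) + 1) * V n a b + (a : ℝ) * V n (a - 1) (b + 1)
      + (b : ℝ) * V (n + 1) (a + 1) (b - 1) = 0 := by
  have := integral_vacuumIntegrand_recurrence (2 * n + 1) a b (by omega) hab
  rw [show 2 * n + 1 + 2 = 2 * (n + 1) + 1 by ring] at this
  unfold V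
  unfold vacuumIntegrand at this
  push_cast at this
  linear_combination this
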